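/- arXiv:2204.07736 — 2 statements merged into one kernel-verified Lean document; each statement's English description precedes it below -/
import Mathlib

section
/- Let K be an algebraically closed field of characteristic 2, d ∈ K, and let I be the two-sided ideal of the free algebra K⟨X,Y⟩ generated by X²+YXY, Y²+XYX+d(XY)², X(YX)², and Y(XY)². Then the element (XY)² + (YX)² belongs to I. -/
/-!
STATEMENT 0: Let `K` be an algebraically closed field of characteristic 2, `d ∈ K`,
and let `I` be the two-sided ideal of the free algebra `K⟨X,Y⟩` generated by
`X²+YXY`, `Y²+XYX+d(XY)²`, `X(YX)²` and `Y(XY)²`.  Then `(XY)² + (YX)² ∈ I`.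
-/

noncomputable section

theorem quaternion_relation_mem_ideal
    (K : Type) [Field K] [IsAlgClosed K] (hK : ringChar K = 2) (d : K)
    (X Y : FreeAlgebra K (Fin 2))
    (hX : X = FreeAlgebra.ι K 0) (hY : Y = FreeAlgebra.ι K 1)
    (I : TwoSidedIdeal (FreeAlgebra K (Fin 2)))
    (hI : I = TwoSidedIdeal.span
      {X * X + Y * X * Y,
       Y * Y + X * Y * X + d • (X * Y * X * Y),
       X * (Y * X) ^ 2,
       Y * (X * Y) ^ 2}) :
    (X * Y) ^ 2 + (Y * X) ^ 2 ∈ I := by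
  haveI : CharP K 2 := hK ▸ ringChar.charP K
  have h2K : (2 : K) = 0 := by exact_mod_cast CharP.cast_eq_zero K 2
  have h2 : (2 : FreeAlgebra K (Fin 2)) = 0 := by
    rw [show (2 : FreeAlgebra K (Fin 2)) = algebraMap K _ 2 from (map_ofNat _ 2).symm,
      h2K, map_zero]
  have ha : X * X + Y * X * Y ∈ I := by
    rw [hI]
    exact TwoSidedIdeal.subset_span (by simp)
  have hmem : X * (X * X + Y * X * Y) + (X * X + Y * X * Y) * X ∈ I :=
    I.add_mem (I.mul_mem_left _ _ ha) (I.mul_mem_right _ _ ha)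
  have key : (X * Y) ^ 2 + (Y * X) ^ 2 =
      X * (X * X + Y * X * Y) + (X * X + Y * X * Y) * X - 2 * (X * X * X) := by
    noncomm_ring
  rw [key, h2, zero_mul, sub_zero]
  exact hmem
end
end

section
/- Let K be an algebraically closed field of characteristic 2, d ∈ K, and R = R(2,0,d) = K⟨X,Y⟩/I with I = ⟨X²+YXY, Y²+XYX+d(XY)², X(YX)², Y(XY)²⟩. Then R is a finite-dimensional K-algebra of dimension 8, and the images of the monomials 1, X, Y, XY, YX, XYX, YXY, (XY)² form a K-basis B of R. -/
/-!
STATEMENT 1: Let `K` be an algebraically closed field of characteristic 2, `d ∈ K`, and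
`R = R(2,0,d) = K⟨X,Y⟩/I` with `I = ⟨X²+YXY, Y²+XYX+d(XY)², X(YX)², Y(XY)²⟩`.
Then `R` is a finite dimensional `K`-algebra of dimension `8`, and the images of the
monomials `1, X, Y, XY, YX, XYX, YXY, (XY)²` form a `K`-basis of `R`.
-/

noncomputable section

namespace QuatBV

variable (K : Type) [Field K] (d : K)

abbrev F := FreeAlgebra K (Fin 2)

def Xg : F K := FreeAlgebra.ι K 0
def Yg : F K := FreeAlgebra.ι K 1

/-- The four defining relators of `R(2,0,d)`; the quotient `RingQuot (Rel K d)` is the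
quotient of the free algebra `K⟨X,Y⟩` by the two-sided ideal generated by them. -/
inductive Rel (d : K) : F K → F K → Prop
  | rx : Rel d (Xg K * Xg K + Yg K * Xg K * Yg K) 0
  | ry : Rel d (Yg K * Yg K + Xg K * Yg K * Xg K + d • (Xg K * Yg K * Xg K * Yg K)) 0
  | zx : Rel d (Xg K * (Yg K * Xg K) ^ 2) 0
  | zy : Rel d (Yg K * (Xg K * Yg K) ^ 2) 0

/-- The algebra `R(2,0,d)`. -/
abbrev R := RingQuot (Rel K d)

def x : R K d := RingQuot.mkAlgHom K (Rel K d) (Xg K)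
def y : R K d := RingQuot.mkAlgHom K (Rel K d) (Yg K)


end QuatBV

/-!
The relations force `a²b = b²a = 0` and `baba = abab`, so the span of the eight monomials is
stable under left multiplication by both generators and hence is all of `R`. Conversely `R`
acts on `K⁸` by the matrices that left multiplication by `x` and `y` would have in this basis;
applied to the first standard vector, the eight monomials give the standard basis, so they
are linearly independent.
-/

theorem Submodule.span_eq_top_of_one_mem_of_mul_mem {R A : Type*} [CommSemiring R] [Semiring A]
    [Algebra R A] {s t : Set A} (hs : Algebra.adjoin R s = ⊤) (h1 : 1 ∈ span R t)
    (hmul : ∀ a ∈ s, ∀ m ∈ t, a * m ∈ span R t) : span R t = ⊤ := by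
  have hgen : ∀ a ∈ s, span R t ≤ (span R t).comap (LinearMap.mulLeft R a) :=
    fun a ha => span_le.2 (hmul a ha)
  have key : ∀ r ∈ Algebra.adjoin R s, ∀ m ∈ span R t, r * m ∈ span R t := by
    intro r hr
    induction hr using Algebra.adjoin_induction with
    | mem a ha => exact fun m hm => hgen a ha hm
    | algebraMap c => intro m hm; rw [← Algebra.smul_def]; exact smul_mem _ c hm
    | add r r' _ _ hr hr' => intro m hm; rw [add_mul]; exact add_mem (hr m hm) (hr' m hm)
    | mul r r' _ _ hr hr' => intro m hm; rw [mul_assoc]; exact hr _ (hr' m hm)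
  exact eq_top_iff.2 fun r _ => mul_one r ▸ key r (hs ▸ Algebra.mem_top) 1 h1

structure R20dRelations {K A : Type*} [CommRing K] [Ring A] [Algebra K A] (d : K) (a b : A) :
    Prop where
  aa_eq : a * a = b * a * b
  bb_eq : b * b = a * b * a + d • (a * b * a * b)
  ababa_eq_zero : a * b * a * b * a = 0
  babab_eq_zero : b * a * b * a * b = 0

namespace R20dRelations

variable {K A : Type*} [CommRing K] [Ring A] [Algebra K A] {d : K} {a b : A}
  (h : R20dRelations d a b)
include h

theorem baaba_eq_zero : b * a * a * b * a = 0 :=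
  calc b * a * a * b * a = b * b * (a * b * b * a) := by rw [mul_assoc b a a, h.aa_eq]; noncomm_ring
    _ = a * b * a * (a * b * b * a) + d • (a * b * a * b * a * (b * b * a)) := by
      nth_rw 1 [h.bb_eq]; noncomm_ring
    _ = a * b * (a * a) * (b * b * a) := by
      rw [h.ababa_eq_zero, zero_mul, smul_zero, add_zero]; noncomm_ring
    _ = a * b * b * a * b * (b * b) * a := by rw [h.aa_eq]; noncomm_ring
    _ = a * b * b * (a * b * a * b * a) * (a + d • (b * a)) := by rw [h.bb_eq]; noncomm_ring
    _ = 0 := by rw [h.ababa_eq_zero, mul_zero, zero_mul]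

theorem aab_eq_zero : a * a * b = 0 :=
  calc a * a * b = b * a * (b * b) := by rw [h.aa_eq]; noncomm_ring
    _ = b * a * a * b * a * (1 + d • b) := by rw [h.bb_eq]; noncomm_ring
    _ = 0 := by rw [h.baaba_eq_zero, zero_mul]

theorem bba_eq_zero : b * b * a = 0 :=
  calc b * b * a = a * b * (a * a) + d • (a * b * a * b * a) := by rw [h.bb_eq]; noncomm_ring
    _ = a * (b * b) * (a * b) := by rw [h.ababa_eq_zero, smul_zero, add_zero, h.aa_eq]; noncomm_ring
    _ = a * a * b * (a * a * b + d • (a * b * a * b)) := by rw [h.bb_eq]; noncomm_ring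
    _ = 0 := by rw [h.aab_eq_zero, zero_mul]

theorem ababb_eq_zero : a * b * a * b * b = 0 :=
  calc a * b * a * b * b = a * b * (a * a * b) * (a + d • (a * b)) := by
        rw [mul_assoc (a * b * a) b b, h.bb_eq]; noncomm_ring
    _ = 0 := by rw [h.aab_eq_zero, mul_zero, zero_mul]

theorem baba_eq_abab : b * a * b * a = a * b * a * b :=
  calc b * a * b * a = b * (b * b) - d • (b * a * b * a * b) := by rw [h.bb_eq]; noncomm_ring
    _ = b * b * b := by rw [h.babab_eq_zero, smul_zero, sub_zero, mul_assoc]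
    _ = a * b * a * b + d • (a * b * a * b * b) := by rw [h.bb_eq]; noncomm_ring
    _ = a * b * a * b := by rw [h.ababb_eq_zero, smul_zero, add_zero]

end R20dRelations

section Monomials

variable {K A B : Type*} [CommRing K] [Ring A] [Algebra K A] [Ring B] [Algebra K B]

def r20dMonomials (a b : A) : Fin 8 → A :=
  ![1, a, b, a * b, b * a, a * b * a, b * a * b, (a * b) ^ 2]

theorem AlgHom.map_r20dMonomials (f : A →ₐ[K] B) (a b : A) (i : Fin 8) :
    f (r20dMonomials a b i) = r20dMonomials (f a) (f b) i := by
  fin_cases i <;> simp [r20dMonomials]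

namespace R20dRelations

variable {d : K} {a b : A} (h : R20dRelations d a b)
include h

theorem a_mul_mem_span_r20dMonomials (i : Fin 8) :
    a * r20dMonomials a b i ∈ Submodule.span K (Set.range (r20dMonomials a b)) := by
  set S := Submodule.span K (Set.range (r20dMonomials a b))
  have hm (j : Fin 8) : r20dMonomials a b j ∈ S := Submodule.subset_span ⟨j, rfl⟩
  fin_cases i
  · show a * 1 ∈ S; rw [mul_one]; exact hm 1
  · show a * a ∈ S; rw [h.aa_eq]; exact hm 6
  · exact hm 3
  · show a * (a * b) ∈ S; rw [← mul_assoc, h.aab_eq_zero]; exact S.zero_mem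
  · show a * (b * a) ∈ S; rw [← mul_assoc]; exact hm 5
  · show a * (a * b * a) ∈ S; rw [← mul_assoc, ← mul_assoc, h.aab_eq_zero, zero_mul]
    exact S.zero_mem
  · show a * (b * a * b) ∈ S; rw [show a * (b * a * b) = (a * b) ^ 2 by noncomm_ring]; exact hm 7
  · show a * (a * b) ^ 2 ∈ S
    rw [show a * (a * b) ^ 2 = a * a * b * (a * b) by noncomm_ring, h.aab_eq_zero, zero_mul]
    exact S.zero_mem

theorem b_mul_mem_span_r20dMonomials (i : Fin 8) :
    b * r20dMonomials a b i ∈ Submodule.span K (Set.range (r20dMonomials a b)) := by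
  set S := Submodule.span K (Set.range (r20dMonomials a b))
  have hm (j : Fin 8) : r20dMonomials a b j ∈ S := Submodule.subset_span ⟨j, rfl⟩
  fin_cases i
  · show b * 1 ∈ S; rw [mul_one]; exact hm 2
  · exact hm 4
  · show b * b ∈ S; rw [h.bb_eq, show a * b * a * b = (a * b) ^ 2 by noncomm_ring]
    exact S.add_mem (hm 5) (S.smul_mem d (hm 7))
  · show b * (a * b) ∈ S; rw [← mul_assoc]; exact hm 6
  · show b * (b * a) ∈ S; rw [← mul_assoc, h.bba_eq_zero]; exact S.zero_mem
  · show b * (a * b * a) ∈ S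
    rw [← mul_assoc, ← mul_assoc, h.baba_eq_abab,
      show a * b * a * b = (a * b) ^ 2 by noncomm_ring]
    exact hm 7
  · show b * (b * a * b) ∈ S; rw [← mul_assoc, ← mul_assoc, h.bba_eq_zero, zero_mul]
    exact S.zero_mem
  · show b * (a * b) ^ 2 ∈ S
    rw [show b * (a * b) ^ 2 = b * a * b * a * b by noncomm_ring, h.babab_eq_zero]
    exact S.zero_mem

theorem span_r20dMonomials_eq_top (hgen : Algebra.adjoin K {a, b} = ⊤) :
    Submodule.span K (Set.range (r20dMonomials a b)) = ⊤ := by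
  refine Submodule.span_eq_top_of_one_mem_of_mul_mem hgen (Submodule.subset_span ⟨0, rfl⟩) ?_
  rintro c (rfl | rfl) _ ⟨i, rfl⟩
  exacts [h.a_mul_mem_span_r20dMonomials i, h.b_mul_mem_span_r20dMonomials i]

end R20dRelations

end Monomials

section LeftRegular

variable {K : Type*} [CommRing K]

-- Left multiplication by `x` and `y` on `R` in coordinates for the basis `r20dMonomials x y`.
def leftRegX : Module.End K (Fin 8 → K) :=
  LinearMap.pi ![0, .proj 0, 0, .proj 2, 0, .proj 4, .proj 1, .proj 6]

def leftRegY (d : K) : Module.End K (Fin 8 → K) :=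
  LinearMap.pi ![0, 0, .proj 0, 0, .proj 1, .proj 2, .proj 3, .proj 5 + d • .proj 2]

theorem r20dRelations_leftReg (d : K) : R20dRelations d leftRegX (leftRegY d) := by
  constructor <;> ext v i <;> fin_cases i <;> simp [leftRegX, leftRegY]

theorem r20dMonomials_leftReg_single_zero (d : K) (i : Fin 8) :
    r20dMonomials leftRegX (leftRegY d) i (Pi.single 0 1) = Pi.single i 1 := by
  fin_cases i <;> ext j <;> fin_cases j <;> simp [r20dMonomials, leftRegX, leftRegY, sq]

end LeftRegular

theorem add_eq_zero_iff_eq_of_charP_two (K : Type*) {M : Type*} [Ring K] [CharP K 2]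
    [AddCommGroup M] [Module K M] {u v : M} : u + v = 0 ↔ u = v := by
  have hv : -v = v := neg_eq_iff_add_eq_zero.2 <| by
    rw [← two_smul K v, CharTwo.two_eq_zero, zero_smul]
  rw [add_eq_zero_iff_eq_neg, hv]

namespace QuatBV

variable {K : Type} [Field K] {d : K}

theorem adjoin_x_y_eq_top : Algebra.adjoin K {x K d, y K d} = ⊤ := by
  have himage : RingQuot.mkAlgHom K (Rel K d) '' Set.range (FreeAlgebra.ι K) = {x K d, y K d} := by
    ext r; simp [Fin.exists_fin_two, x, y, Xg, Yg, eq_comm]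
  rw [← himage, Algebra.adjoin_image, FreeAlgebra.adjoin_range_ι, Algebra.map_top,
    AlgHom.range_eq_top]
  exact RingQuot.mkAlgHom_surjective K (Rel K d)

variable [CharP K 2] {A : Type*} [Ring A] [Algebra K A] {a b : A}

theorem r20dRelations_iff_forall_rel :
    R20dRelations d a b ↔ ∀ ⦃p q : F K⦄, Rel K d p q →
      FreeAlgebra.lift K ![a, b] p = FreeAlgebra.lift K ![a, b] q := by
  have hX : FreeAlgebra.lift K ![a, b] (Xg K) = a := by simp [Xg]
  have hY : FreeAlgebra.lift K ![a, b] (Yg K) = b := by simp [Yg]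
  have hpow (u v : A) : u * (v * u) ^ 2 = u * v * u * v * u := by noncomm_ring
  constructor
  · rintro h p q (_ | _ | _ | _) <;>
      simp only [map_add, map_mul, map_smul, map_pow, map_zero, hX, hY, hpow]
    · exact (add_eq_zero_iff_eq_of_charP_two K).2 h.aa_eq
    · rw [add_assoc]; exact (add_eq_zero_iff_eq_of_charP_two K).2 h.bb_eq
    · exact h.ababa_eq_zero
    · exact h.babab_eq_zero
  · intro H
    have rx := H .rx; have ry := H .ry; have zx := H .zx; have zy := H .zy
    simp only [map_add, map_mul, map_smul, map_pow, map_zero, hX, hY, hpow, add_assoc]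
      at rx ry zx zy
    exact ⟨(add_eq_zero_iff_eq_of_charP_two K).1 rx, (add_eq_zero_iff_eq_of_charP_two K).1 ry,
      zx, zy⟩

def liftR (h : R20dRelations d a b) : R K d →ₐ[K] A :=
  RingQuot.liftAlgHom K ⟨FreeAlgebra.lift K ![a, b], r20dRelations_iff_forall_rel.1 h⟩

theorem liftR_x (h : R20dRelations d a b) : liftR h (x K d) = a := by simp [liftR, x, Xg]

theorem liftR_y (h : R20dRelations d a b) : liftR h (y K d) = b := by simp [liftR, y, Yg]

theorem r20dRelations_x_y : R20dRelations d (x K d) (y K d) := by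
  have hlift : FreeAlgebra.lift K ![x K d, y K d] = RingQuot.mkAlgHom K (Rel K d) :=
    FreeAlgebra.hom_ext <| funext fun i => by fin_cases i <;> simp [x, y, Xg, Yg]
  exact r20dRelations_iff_forall_rel.2 fun p q hpq => hlift ▸ RingQuot.mkAlgHom_rel K hpq

theorem linearIndependent_r20dMonomials_x_y :
    LinearIndependent K (r20dMonomials (x K d) (y K d)) := by
  let f : R K d →ₗ[K] (Fin 8 → K) :=
    (LinearMap.applyₗ (Pi.single 0 1)).comp (liftR (r20dRelations_leftReg d)).toLinearMap
  have hf : ⇑f ∘ r20dMonomials (x K d) (y K d) = Pi.basisFun K (Fin 8) := funext fun i => by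
    simp [f, AlgHom.map_r20dMonomials, liftR_x, liftR_y, r20dMonomials_leftReg_single_zero]
  exact .of_comp f (hf ▸ (Pi.basisFun K (Fin 8)).linearIndependent)

def r20dBasis : Module.Basis (Fin 8) K (R K d) :=
  .mk linearIndependent_r20dMonomials_x_y
    (r20dRelations_x_y.span_r20dMonomials_eq_top adjoin_x_y_eq_top).ge

theorem dimension_and_basis_of_R20d_general
    (K : Type) [Field K] (hK : ringChar K = 2) (d : K) :
    Module.finrank K (R K d) = 8 ∧
    ∃ B : Module.Basis (Fin 8) K (R K d),
      (B : Fin 8 → R K d) =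
        ![1, x K d, y K d, x K d * y K d, y K d * x K d,
          x K d * y K d * x K d, y K d * x K d * y K d,
          (x K d * y K d) ^ 2] := by
  have : CharP K 2 := ringChar.eq_iff.mp hK
  refine ⟨?_, r20dBasis, Module.Basis.coe_mk _ _⟩
  rw [Module.finrank_eq_card_basis r20dBasis, Fintype.card_fin]

theorem dimension_and_basis_of_R20d
    (K : Type) [Field K] [IsAlgClosed K] (hK : ringChar K = 2) (d : K) :
    Module.finrank K (R K d) = 8 ∧
    ∃ B : Module.Basis (Fin 8) K (R K d),
      (B : Fin 8 → R K d) =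
        ![1, x K d, y K d, x K d * y K d, y K d * x K d,
          x K d * y K d * x K d, y K d * x K d * y K d,
          (x K d * y K d) ^ 2] :=
  dimension_and_basis_of_R20d_general K hK d

end QuatBV
end
end
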